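/- Let n ≥ 1, d = 2^n, let Γ = Σ_k (ψ_k ψ_k†)^T ⊗ (ψ_k ψ_k†) be built from tensor products ψ_k = ψ_{1,k_1} ⊗ ⋯ ⊗ ψ_{n,k_n} of single-qubit SIC-POVM states, and let φ = (1/√d) Σ_{x=1}^d e_x ⊗ e_x ∈ ℂ^{d²}. Then the matrix B = (1/d)·Γ − φφ† is positive semidefinite. -/

import Mathlib

open Matrix Polynomial
open scoped Kronecker ComplexOrder Classical

noncomputable section

/-- Hermitian inner product on `m → ℂ`, conjugate-linear in the first argument. -/
def cinner {m : Type*} [Fintype m] (v w : m → ℂ) : ℂ :=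
  ∑ a, (starRingEnd ℂ) (v a) * w a

/-- A single-qubit SIC-POVM: four unit vectors in ℂ² with pairwise squared overlaps 1/3. -/
def IsSICPOVM (ψ : Fin 4 → Fin 2 → ℂ) : Prop :=
  (∀ k, cinner (ψ k) (ψ k) = 1) ∧
  ∀ k k', k ≠ k' → ‖cinner (ψ k) (ψ k')‖ ^ 2 = 1 / 3

/-- Tensor product state `ψ_k = ψ_{1,k_1} ⊗ ⋯ ⊗ ψ_{n,k_n}` on `ℂ^(2^n)`,
    whose coordinates are indexed by `Fin n → Fin 2`. -/
def prodState {n : ℕ} (ψ : Fin n → Fin 4 → Fin 2 → ℂ) (k : Fin n → Fin 4) :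
    (Fin n → Fin 2) → ℂ :=
  fun x => ∏ i, ψ i (k i) (x i)

/-- The rank-one projector `ψψ†` onto a vector. -/
def proj {m : Type*} (v : m → ℂ) : Matrix m m ℂ :=
  Matrix.vecMulVec v (star v)

/-- The matrix `Γ = Σ_k (ψ_k ψ_k†)ᵀ ⊗ (ψ_k ψ_k†)`. -/
def Gam {n : ℕ} (ψ : Fin n → Fin 4 → Fin 2 → ℂ) :
    Matrix ((Fin n → Fin 2) × (Fin n → Fin 2)) ((Fin n → Fin 2) × (Fin n → Fin 2)) ℂ :=
  ∑ k : Fin n → Fin 4, (proj (prodState ψ k))ᵀ ⊗ₖ proj (prodState ψ k)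

/-- The maximally entangled vector `φ = (1/√d) Σ_x e_x ⊗ e_x`, `d = 2^n`. -/
def maxEnt (n : ℕ) : (Fin n → Fin 2) × (Fin n → Fin 2) → ℂ :=
  fun p => if p.1 = p.2 then (((Real.sqrt (2 ^ n))⁻¹ : ℝ) : ℂ) else 0

/-
Write `w_k = conj ψ_k ⊗ ψ_k`, so that `Γ = Σ_k w_k w_k†`. A single-qubit SIC-POVM is a tight frame,
`Σ_c ψ_c ψ_c† = 2·1`: its frame operator `S` is Hermitian with `tr S = 4` and
`tr S² = 4·1 + 12·(1/3) = 8 = (tr S)² / 2`, and equality in `(tr S)² ≤ 2 tr S²` forces `S` to be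
scalar. Taking tensor products, `Σ_k w_k = d Σ_x e_x ⊗ e_x = d^{3/2} φ`. Hence, with `N = 4^n = d²`
terms, `B = d⁻³ (N Σ_k w_k w_k† - (Σ_k w_k)(Σ_k w_k)†)`, which is positive semidefinite by the
Cauchy–Schwarz inequality `|Σ_k ⟨w_k, x⟩|² ≤ N Σ_k |⟨w_k, x⟩|²`.
-/

theorem Matrix.IsHermitian.eq_smul_one_of_trace_of_trace_mul_self {𝕜 m : Type*} [RCLike 𝕜]
    [Fintype m] [DecidableEq m] {A : Matrix m m 𝕜} (hA : A.IsHermitian) (c : ℝ)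
    (h₁ : A.trace = Fintype.card m * c) (h₂ : (A * A).trace = Fintype.card m * c ^ 2) :
    A = (c : 𝕜) • 1 := by
  set B := A - (c : 𝕜) • 1 with hB
  have hBH : Bᴴ = B := by
    rw [hB, conjTranspose_sub, hA.eq, conjTranspose_smul, conjTranspose_one, RCLike.star_def,
      RCLike.conj_ofReal]
  have htrace : (Bᴴ * B).trace = 0 := by
    rw [hBH, hB, sub_mul, mul_sub, mul_sub, trace_sub, trace_sub, trace_sub]
    simp only [mul_smul_comm, smul_mul_assoc, mul_one, one_mul, smul_smul, trace_smul, trace_one,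
      h₁, h₂, smul_eq_mul]
    ring
  rwa [trace_conjTranspose_mul_self_eq_zero_iff, hB, sub_eq_zero] at htrace

lemma norm_sum_sq_le_card_mul_sum_norm_sq {ι E : Type*} [Fintype ι] [SeminormedAddCommGroup E]
    (c : ι → E) : ‖∑ k, c k‖ ^ 2 ≤ Fintype.card ι * ∑ k, ‖c k‖ ^ 2 :=
  calc ‖∑ k, c k‖ ^ 2 ≤ (∑ k, ‖c k‖) ^ 2 := by gcongr; exact norm_sum_le _ _
    _ ≤ Fintype.card ι * ∑ k, ‖c k‖ ^ 2 := sq_sum_le_card_mul_sum_sq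

section Projector

variable {m : Type*}

lemma proj_real_smul (r : ℝ) (v : m → ℂ) : proj (r • v) = ((r ^ 2 : ℝ) : ℂ) • proj v := by
  ext i j
  simp only [proj, vecMulVec_apply, Pi.star_apply, Pi.smul_apply, star_smul, star_trivial,
    Complex.real_smul, Matrix.smul_apply, smul_eq_mul, Complex.ofReal_pow]
  ring

variable [Fintype m]

lemma cinner_eq_star_dotProduct (v w : m → ℂ) : cinner v w = star v ⬝ᵥ w := rfl

lemma posSemidef_proj (v : m → ℂ) : (proj v).PosSemidef :=
  posSemidef_vecMulVec_self_star v

lemma star_dotProduct_proj_mulVec (v x : m → ℂ) :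
    star x ⬝ᵥ (proj v *ᵥ x) = ((‖cinner v x‖ ^ 2 : ℝ) : ℂ) := by
  rw [proj, vecMulVec_mulVec, op_smul_eq_smul, dotProduct_smul, smul_eq_mul,
    star_dotProduct (v := x), Complex.ofReal_pow, ← Complex.mul_conj']
  rfl

lemma trace_proj (v : m → ℂ) : (proj v).trace = cinner v v := by
  rw [proj, trace_vecMulVec, dotProduct_comm]
  rfl

lemma trace_proj_mul_proj (v w : m → ℂ) :
    (proj v * proj w).trace = ((‖cinner v w‖ ^ 2 : ℝ) : ℂ) := by
  rw [proj, proj, vecMulVec_mul_vecMulVec, trace_vecMulVec, dotProduct_smul, smul_eq_mul,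
    dotProduct_comm v, star_dotProduct (v := w), Complex.ofReal_pow, ← Complex.mul_conj']
  rfl

theorem posSemidef_card_smul_sum_proj_sub_proj_sum {ι : Type*} [Fintype ι] (w : ι → m → ℂ) :
    ((Fintype.card ι : ℂ) • ∑ k, proj (w k) - proj (∑ k, w k)).PosSemidef := by
  have hsum : ((Fintype.card ι : ℂ) • ∑ k, proj (w k)).PosSemidef :=
    (posSemidef_sum _ fun k _ => posSemidef_proj (w k)).smul (Nat.cast_nonneg _)
  refine posSemidef_iff_dotProduct_mulVec.2
    ⟨hsum.isHermitian.sub (posSemidef_proj _).isHermitian, fun x => ?_⟩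
  have hcinner : cinner (∑ k, w k) x = ∑ k, cinner (w k) x := by
    simp only [cinner_eq_star_dotProduct, star_sum, sum_dotProduct]
  rw [sub_mulVec, dotProduct_sub, smul_mulVec, dotProduct_smul, sum_mulVec, dotProduct_sum]
  simp only [star_dotProduct_proj_mulVec, hcinner, smul_eq_mul, sub_nonneg]
  exact_mod_cast norm_sum_sq_le_card_mul_sum_norm_sq fun k => cinner (w k) x

end Projector

theorem IsSICPOVM.sum_proj_eq {ψ : Fin 4 → Fin 2 → ℂ} (h : IsSICPOVM ψ) :
    ∑ k, proj (ψ k) = (2 : ℂ) • 1 := by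
  have hoverlap (k j : Fin 4) : ‖cinner (ψ k) (ψ j)‖ ^ 2 = if k = j then 1 else 1 / 3 := by
    split_ifs with hkj
    · simp [hkj, h.1 j]
    · exact h.2 k j hkj
  refine (posSemidef_sum _ fun k _ => posSemidef_proj (ψ k)).isHermitian
    |>.eq_smul_one_of_trace_of_trace_mul_self 2 ?_ ?_
  · norm_num [trace_sum, trace_proj, h.1]
  · simp only [Finset.sum_mul_sum, trace_sum, trace_proj_mul_proj, hoverlap]
    simp only [Fin.sum_univ_four, Fin.isValue, Fin.reduceEq, ↓reduceIte, Complex.ofReal_one,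
      Complex.ofReal_div, Complex.ofReal_ofNat, Fintype.card_fin, Nat.cast_ofNat]
    norm_num

theorem IsSICPOVM.sum_conj_mul {ψ : Fin 4 → Fin 2 → ℂ} (h : IsSICPOVM ψ) (a b : Fin 2) :
    ∑ k, star (ψ k a) * ψ k b = if a = b then 2 else 0 := by
  have := congrFun (congrFun h.sum_proj_eq b) a
  simp only [Matrix.sum_apply, proj, vecMulVec_apply, Pi.star_apply, Matrix.smul_apply,
    one_apply] at this
  simp_rw [mul_comm (star _), this, eq_comm (a := b)]
  simp

def conjKron {m : Type*} (v : m → ℂ) : m × m → ℂ :=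
  fun p => star (v p.1) * v p.2

lemma transpose_proj_kronecker_proj {m : Type*} (v : m → ℂ) :
    (proj v)ᵀ ⊗ₖ proj v = proj (conjKron v) := by
  ext ⟨a, b⟩ ⟨c, d⟩
  simp only [proj, conjKron, kroneckerMap_apply, transpose_apply, vecMulVec_apply, Pi.star_apply,
    star_mul', star_star]
  ring

lemma sum_conjKron_prodState {n : ℕ} {ψ : Fin n → Fin 4 → Fin 2 → ℂ}
    (hψ : ∀ i, IsSICPOVM (ψ i)) (p : (Fin n → Fin 2) × (Fin n → Fin 2)) :
    ∑ k, conjKron (prodState ψ k) p = if p.1 = p.2 then 2 ^ n else 0 := by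
  simp only [conjKron, prodState, star_prod, ← Finset.prod_mul_distrib]
  rw [← Fintype.prod_sum fun i c => star (ψ i c (p.1 i)) * ψ i c (p.2 i)]
  simp only [(hψ _).sum_conj_mul, Fintype.prod_ite_zero, Finset.prod_const, Finset.card_univ,
    Fintype.card_fin, funext_iff]

lemma maxEnt_eq_smul_sum_conjKron {n : ℕ} {ψ : Fin n → Fin 4 → Fin 2 → ℂ}
    (hψ : ∀ i, IsSICPOVM (ψ i)) :
    maxEnt n = ((√(2 ^ n) ^ 3)⁻¹ : ℝ) • ∑ k, conjKron (prodState ψ k) := by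
  have hsqrt : (√(2 ^ n) : ℂ) ^ 2 = 2 ^ n := by
    norm_cast
    exact Real.sq_sqrt (by positivity)
  ext p
  rw [Pi.smul_apply, Finset.sum_apply, sum_conjKron_prodState hψ, maxEnt, Complex.real_smul]
  split_ifs
  · push_cast
    field_simp
    exact hsqrt
  · simp

lemma proj_maxEnt_eq {n : ℕ} {ψ : Fin n → Fin 4 → Fin 2 → ℂ} (hψ : ∀ i, IsSICPOVM (ψ i)) :
    proj (maxEnt n) = ((2 : ℂ) ^ n)⁻¹ ^ 3 • proj (∑ k, conjKron (prodState ψ k)) := by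
  rw [maxEnt_eq_smul_sum_conjKron hψ, proj_real_smul,
    show (√(2 ^ n) ^ 3)⁻¹ ^ 2 = ((√(2 ^ n) ^ 2) ^ 3)⁻¹ by ring, Real.sq_sqrt (by positivity)]
  push_cast
  rw [inv_pow]

theorem B_posSemidef_general (n : ℕ)
    (ψ : Fin n → Fin 4 → Fin 2 → ℂ) (hψ : ∀ i, IsSICPOVM (ψ i)) :
    (((2 : ℂ) ^ n)⁻¹ • Gam ψ - proj (maxEnt n)).PosSemidef := by
  set w := fun k => conjKron (prodState ψ k)
  have hGam : Gam ψ = ∑ k, proj (w k) := by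
    simp only [w, Gam, transpose_proj_kronecker_proj]
  have hcard : (Fintype.card (Fin n → Fin 4) : ℂ) = ((2 : ℂ) ^ n) ^ 2 := by
    rw [← pow_mul, mul_comm, pow_mul]
    norm_num
  have hB : ((2 : ℂ) ^ n)⁻¹ • ∑ k, proj (w k) - ((2 : ℂ) ^ n)⁻¹ ^ 3 • proj (∑ k, w k)
      = ((2 : ℂ) ^ n)⁻¹ ^ 3 •
        ((Fintype.card (Fin n → Fin 4) : ℂ) • ∑ k, proj (w k) - proj (∑ k, w k)) := by
    rw [hcard, smul_sub, smul_smul]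
    congr 2
    field_simp
  rw [proj_maxEnt_eq hψ, hGam, hB]
  exact (posSemidef_card_smul_sum_proj_sub_proj_sum w).smul (by positivity)

/-- The matrix `B = (1/d)Γ - φφ†` is positive semidefinite. -/
theorem B_posSemidef (n : ℕ) (hn : 1 ≤ n)
    (ψ : Fin n → Fin 4 → Fin 2 → ℂ) (hψ : ∀ i, IsSICPOVM (ψ i)) :
    (((2 : ℂ) ^ n)⁻¹ • Gam ψ - proj (maxEnt n)).PosSemidef :=
  B_posSemidef_general n ψ hψ
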